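/- Let R' = Z[y_1,...,y_{n-1}] and let I_{n,r} ⊆ R'[ξ_1,...,ξ_r] be the ideal generated by ξ_i(ξ_i + y_1)⋯(ξ_i + y_{n-1}) for 1 ≤ i ≤ r. Then the ideal of symmetric elements I_{n,r} ∩ R'[ξ_1,...,ξ_r]^{S_r} is generated, as an ideal of R'[ξ_1,...,ξ_r]^{S_r}, by the double monomial symmetric polynomials m_λ(ξ|ȳ) for partitions λ with λ_1 ≥ n and at most r parts, where ȳ = (0, y_1, ..., y_{n-1}, 0, y_1, ..., y_{n-1}, ...) extended by ȳ_i = y_{i mod n} with ȳ_0 = ȳ_n = 0. -/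

import Mathlib

open MvPolynomial

/-- The parameters `ȳ_t = y_{t mod n}` (with `ȳ_0 = ȳ_n = 0`), as elements of
`R' = ℤ[y_1, …, y_{n-1}]`, the variable `X j : Fin (n-1)` being `y_{j+1}`. -/
noncomputable def ybar (n : ℕ) (hn : 0 < n) (t : ℕ) : MvPolynomial (Fin (n - 1)) ℤ :=
  if h : t % n = 0 then 0
  else MvPolynomial.X ⟨t % n - 1, by have := Nat.mod_lt t hn; omega⟩

/-- The double monomial symmetric polynomial `m_λ(ξ|ȳ)` in `ξ_1, …, ξ_r` over `R'`:
the symmetrization (sum over distinct terms) of `∏_i (ξ_i + ȳ_0)⋯(ξ_i + ȳ_{λ_i − 1})`. -/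
noncomputable def dmsymY (n : ℕ) (hn : 0 < n) {r : ℕ} (l : Fin r → ℕ) :
    MvPolynomial (Fin r) (MvPolynomial (Fin (n - 1)) ℤ) :=
  (Finset.image
    (fun σ : Equiv.Perm (Fin r) =>
      ∏ i, ∏ t ∈ Finset.range (l i), (MvPolynomial.X (σ i) + MvPolynomial.C (ybar n hn t)))
    Finset.univ).sum id


/-!
Over any coefficient ring the double monomial symmetric polynomials `m_λ(ξ|a)`, `λ` a partition,
span the symmetric polynomials, because `m_λ(ξ|a)` is the monomial symmetric polynomial `m_λ`
plus terms of lower degree. Those with `λ_1 ≥ n` lie in `I_{n,r}`, those with `λ_1 < n` have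
degree `< n` in each variable. So a symmetric `f ∈ I_{n,r}` is `g + h` with `g` in the span of the
former and `h ∈ I_{n,r}` of degree `< n` in each variable. Such an `h` vanishes on the grid
`{-ȳ_0, …, -ȳ_{n-1}}^r`, and the `ȳ_t` with `t < n` are distinct, so `h = 0` by the
combinatorial Nullstellensatz.
-/

open Finset

namespace MvPolynomial

section IsMonicAt

variable {σ R : Type*} [CommSemiring R]

-- Monicity for the coordinatewise (divisibility) order on exponents.
def IsMonicAt (A : σ →₀ ℕ) (p : MvPolynomial σ R) : Prop :=
  (∀ μ ∈ p.support, μ ≤ A) ∧ coeff A p = 1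

lemma coeff_add_mul_of_support_le {p q : MvPolynomial σ R} {A B : σ →₀ ℕ}
    (hp : ∀ μ ∈ p.support, μ ≤ A) (hq : ∀ μ ∈ q.support, μ ≤ B) :
    coeff (A + B) (p * q) = coeff A p * coeff B q := by
  classical
  rw [coeff_mul, sum_eq_single (A, B) _ (by simp)]
  rintro ⟨a, b⟩ hab hne
  by_contra hc
  have ha := hp a (mem_support_iff.2 (left_ne_zero_of_mul hc))
  have hb := hq b (mem_support_iff.2 (right_ne_zero_of_mul hc))
  have hsum : a + b = A + B := mem_antidiagonal.1 hab
  have hAB : A + B ≤ a + B := hsum ▸ add_le_add le_rfl hb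
  have haA : a = A := le_antisymm ha (le_of_add_le_add_right hAB)
  subst haA
  exact hne (Prod.ext rfl (add_left_cancel hsum))

lemma IsMonicAt.mul {p q : MvPolynomial σ R} {A B : σ →₀ ℕ} (hp : IsMonicAt A p)
    (hq : IsMonicAt B q) : IsMonicAt (A + B) (p * q) := by
  classical
  refine ⟨fun μ hμ => ?_, by rw [coeff_add_mul_of_support_le hp.1 hq.1, hp.2, hq.2, one_mul]⟩
  obtain ⟨a, ha, b, hb, rfl⟩ := mem_add.1 (support_mul p q hμ)
  exact add_le_add (hp.1 a ha) (hq.1 b hb)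

lemma isMonicAt_prod {ι : Type*} (s : Finset ι) {p : ι → MvPolynomial σ R} {A : ι → σ →₀ ℕ}
    (h : ∀ i ∈ s, IsMonicAt (A i) (p i)) : IsMonicAt (∑ i ∈ s, A i) (∏ i ∈ s, p i) := by
  classical
  induction s using Finset.induction with
  | empty =>
    rw [prod_empty, sum_empty]
    refine ⟨fun μ hμ => ?_, coeff_zero_one⟩
    rw [mem_support_iff, coeff_one, ite_ne_right_iff] at hμ
    simp [← hμ.1]
  | insert i s hi ih =>
    rw [sum_insert hi, prod_insert hi]
    exact (h i (mem_insert_self i s)).mul (ih fun j hj => h j (mem_insert_of_mem hj))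

lemma isMonicAt_X_add_C (j : σ) (c : R) : IsMonicAt (Finsupp.single j 1) (X j + C c) := by
  classical
  refine ⟨fun μ hμ => ?_, by
    rw [coeff_add, coeff_X_same, coeff_C_of_ne_zero (by simp), add_zero]⟩
  rw [mem_support_iff, coeff_add, coeff_X, coeff_C] at hμ
  by_cases h1 : Finsupp.single j 1 = μ
  · exact h1.ge
  · rw [if_neg h1, zero_add, ite_ne_right_iff] at hμ
    simp [← hμ.1]

lemma IsMonicAt.coeff_eq_zero_of_degree_le {p : MvPolynomial σ R} {A μ : σ →₀ ℕ}
    (hp : IsMonicAt A p) (hμ : A.degree ≤ μ.degree) (hne : μ ≠ A) : coeff μ p = 0 := by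
  by_contra hc
  have hle := hp.1 μ (mem_support_iff.2 hc)
  have hdeg : (A - μ).degree = 0 := by
    have := map_add Finsupp.degree μ (A - μ)
    rw [add_tsub_cancel_of_le hle] at this
    omega
  exact hne (le_antisymm hle (tsub_eq_zero_iff_le.1 ((Finsupp.degree_eq_zero_iff _).1 hdeg)))

lemma IsMonicAt.unique [Nontrivial R] {p : MvPolynomial σ R} {A B : σ →₀ ℕ}
    (hA : IsMonicAt A p) (hB : IsMonicAt B p) : A = B :=
  le_antisymm (hB.1 A (by simp [mem_support_iff, hA.2])) (hA.1 B (by simp [mem_support_iff, hB.2]))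

end IsMonicAt

section FactorialMonomial

variable {σ R : Type*} [Fintype σ] [CommSemiring R] (a : ℕ → R)

noncomputable def factorialMonomial (m : σ → ℕ) : MvPolynomial σ R :=
  ∏ j, ∏ t ∈ range (m j), (X j + C (a t))

lemma isMonicAt_factorialMonomial (m : σ → ℕ) :
    IsMonicAt (Finsupp.equivFunOnFinite.symm m) (factorialMonomial a m) := by
  have hfactor (j : σ) :
      IsMonicAt (Finsupp.single j (m j)) (∏ t ∈ range (m j), (X j + C (a t))) := by
    simpa using isMonicAt_prod (range (m j)) fun t _ => isMonicAt_X_add_C j (a t)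
  have hexp : ∑ j, Finsupp.single j (m j) = Finsupp.equivFunOnFinite.symm m := by
    classical
    ext; simp [Finsupp.single_apply]
  exact hexp ▸ isMonicAt_prod univ fun j _ => hfactor j

lemma factorialMonomial_injective [Nontrivial R] :
    Function.Injective (factorialMonomial a : (σ → ℕ) → MvPolynomial σ R) := fun m m' h =>
  Finsupp.equivFunOnFinite.symm.injective <|
    (isMonicAt_factorialMonomial a m).unique (h ▸ isMonicAt_factorialMonomial a m')

lemma rename_factorialMonomial (τ : Equiv.Perm σ) (m : σ → ℕ) :
    rename τ (factorialMonomial a m) = factorialMonomial a (m ∘ τ.symm) := by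
  rw [factorialMonomial, factorialMonomial, map_prod]
  conv_rhs => rw [← Equiv.prod_comp τ]
  simp [map_prod]

end FactorialMonomial

section DoubleMonomialSymm

variable {σ R : Type*} [Fintype σ] [DecidableEq σ] [CommSemiring R] (a : ℕ → R)

def rearrangements (l : σ → ℕ) : Finset (σ → ℕ) :=
  univ.image fun τ : Equiv.Perm σ => l ∘ τ

lemma mem_rearrangements {l m : σ → ℕ} :
    m ∈ rearrangements l ↔ ∃ τ : Equiv.Perm σ, l ∘ τ = m := by
  simp [rearrangements]

lemma comp_mem_rearrangements {l m : σ → ℕ} (h : m ∈ rearrangements l) (τ : Equiv.Perm σ) :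
    m ∘ τ ∈ rearrangements l := by
  obtain ⟨π, rfl⟩ := mem_rearrangements.1 h
  exact mem_rearrangements.2 ⟨τ.trans π, rfl⟩

lemma mem_rearrangements_comm {l m : σ → ℕ} (h : m ∈ rearrangements l) :
    l ∈ rearrangements m := by
  obtain ⟨π, rfl⟩ := mem_rearrangements.1 h
  exact mem_rearrangements.2 ⟨π⁻¹, by ext; simp⟩

lemma mem_rearrangements_trans {l m k : σ → ℕ} (hm : m ∈ rearrangements l)
    (hk : k ∈ rearrangements m) : k ∈ rearrangements l := by
  obtain ⟨π, rfl⟩ := mem_rearrangements.1 hk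
  exact comp_mem_rearrangements hm π

lemma sum_eq_of_mem_rearrangements {l m : σ → ℕ} (h : m ∈ rearrangements l) :
    ∑ i, m i = ∑ i, l i := by
  obtain ⟨π, rfl⟩ := mem_rearrangements.1 h
  exact Equiv.sum_comp π l

lemma IsSymmetric.coeff_of_mem_rearrangements {f : MvPolynomial σ R} (hf : f.IsSymmetric)
    {μ : σ →₀ ℕ} {m : σ → ℕ} (h : m ∈ rearrangements ⇑μ) :
    coeff (Finsupp.equivFunOnFinite.symm m) f = coeff μ f := by
  obtain ⟨π, rfl⟩ := mem_rearrangements.1 h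
  have hexp : Finsupp.equivFunOnFinite.symm (⇑μ ∘ π) = μ.mapDomain ⇑π⁻¹ := by
    ext j
    simp [Finsupp.mapDomain_equiv_apply]
  rw [hexp, ← coeff_rename_mapDomain _ (Equiv.injective π⁻¹) f μ, hf]

-- `m_l(ξ|a)`, summing each distinct term once.
noncomputable def doubleMonomialSymm (l : σ → ℕ) : MvPolynomial σ R :=
  ∑ m ∈ rearrangements l, factorialMonomial a m

lemma isSymmetric_doubleMonomialSymm (l : σ → ℕ) : (doubleMonomialSymm a l).IsSymmetric := by
  intro τ
  rw [doubleMonomialSymm, map_sum]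
  simp_rw [rename_factorialMonomial]
  exact sum_nbij' (· ∘ τ.symm) (· ∘ τ) (fun m hm => comp_mem_rearrangements hm _)
    (fun m hm => comp_mem_rearrangements hm _) (fun m _ => by ext; simp) (fun m _ => by ext; simp)
    (fun _ _ => rfl)

lemma coeff_doubleMonomialSymm_of_sum_le (l : σ → ℕ) {μ : σ →₀ ℕ} (hμ : ∑ i, l i ≤ μ.degree) :
    coeff μ (doubleMonomialSymm a l) = if ⇑μ ∈ rearrangements l then 1 else 0 := by
  rw [doubleMonomialSymm, coeff_sum, ← sum_ite_eq (rearrangements l) ⇑μ fun _ => (1 : R)]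
  refine sum_congr rfl fun m hm => ?_
  have hmonic := isMonicAt_factorialMonomial a m
  split_ifs with h
  · subst h
    rw [Finsupp.equivFunOnFinite_symm_coe] at hmonic
    exact hmonic.2
  · refine hmonic.coeff_eq_zero_of_degree_le ?_ fun he => h (by rw [he]; rfl)
    simpa [Finsupp.degree_eq_sum, sum_eq_of_mem_rearrangements hm] using hμ

end DoubleMonomialSymm

section Spanning

variable {R : Type*} [CommRing R] (a : ℕ → R) {r : ℕ}

noncomputable def sortDesc (μ : Fin r → ℕ) : Fin r → ℕ :=
  μ ∘ Tuple.sort μ ∘ Fin.revPerm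

lemma antitone_sortDesc (μ : Fin r → ℕ) : Antitone (sortDesc μ) :=
  (Tuple.monotone_sort μ).comp_antitone fun _ _ h => by simpa using Fin.rev_le_rev.2 h

lemma sortDesc_mem_rearrangements (μ : Fin r → ℕ) : sortDesc μ ∈ rearrangements μ :=
  mem_rearrangements.2 ⟨Fin.revPerm.trans (Tuple.sort μ), rfl⟩

lemma eq_sortDesc_of_mem_rearrangements {l μ : Fin r → ℕ} (hl : Antitone l)
    (h : μ ∈ rearrangements l) : l = sortDesc μ := by
  obtain ⟨τ, hτ⟩ :=
    mem_rearrangements.1 (mem_rearrangements_trans h (sortDesc_mem_rearrangements μ))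
  rw [← hτ]
  exact Tuple.unique_antitone (σ := 1) hl (hτ ▸ antitone_sortDesc μ)

noncomputable def sortedExponentsOfDegree (f : MvPolynomial (Fin r) R) (d : ℕ) :
    Finset (Fin r → ℕ) :=
  (f.support.filter (·.degree = d)).image fun μ : Fin r →₀ ℕ => sortDesc ⇑μ

lemma antitone_and_sum_of_mem_sortedExponentsOfDegree {f : MvPolynomial (Fin r) R} {d : ℕ}
    {l : Fin r → ℕ} (hl : l ∈ sortedExponentsOfDegree f d) : Antitone l ∧ ∑ i, l i = d := by
  obtain ⟨μ, hμ, rfl⟩ := mem_image.1 hl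
  refine ⟨antitone_sortDesc _, ?_⟩
  rw [sum_eq_of_mem_rearrangements (sortDesc_mem_rearrangements _), ← Finsupp.degree_eq_sum]
  exact (mem_filter.1 hμ).2

-- Subtracting the `m_l(ξ|a)` with the top coefficients of `f` kills all monomials of degree `d`
-- because `m_l(ξ|a)` is the monomial symmetric polynomial `m_l` plus terms of lower degree.
lemma coeff_sub_sum_doubleMonomialSymm_eq_zero {f : MvPolynomial (Fin r) R} (hf : f.IsSymmetric)
    {d : ℕ} (htop : ∀ μ : Fin r →₀ ℕ, d < μ.degree → coeff μ f = 0) {μ : Fin r →₀ ℕ}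
    (hμ : d ≤ μ.degree) :
    coeff μ (f - ∑ l ∈ sortedExponentsOfDegree f d,
      coeff (Finsupp.equivFunOnFinite.symm l) f • doubleMonomialSymm a l) = 0 := by
  have hterm : ∀ l ∈ sortedExponentsOfDegree f d,
      coeff μ (coeff (Finsupp.equivFunOnFinite.symm l) f • doubleMonomialSymm a l) =
        if sortDesc μ = l then coeff (Finsupp.equivFunOnFinite.symm l) f else 0 := by
    intro l hl
    obtain ⟨hanti, hsum⟩ := antitone_and_sum_of_mem_sortedExponentsOfDegree hl
    have hiff : ⇑μ ∈ rearrangements l ↔ sortDesc μ = l :=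
      ⟨fun h => (eq_sortDesc_of_mem_rearrangements hanti h).symm,
        fun h => h ▸ mem_rearrangements_comm (sortDesc_mem_rearrangements μ)⟩
    rw [coeff_smul, coeff_doubleMonomialSymm_of_sum_le a l (hsum ▸ hμ)]
    simp only [hiff, smul_eq_mul, mul_ite, mul_one, mul_zero]
  rw [coeff_sub, coeff_sum, sum_congr rfl hterm, sum_ite_eq, sub_eq_zero]
  split_ifs with hmem
  · exact (hf.coeff_of_mem_rearrangements (sortDesc_mem_rearrangements μ)).symm
  · by_contra hne
    rcases hμ.lt_or_eq with hlt | heq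
    · exact hne (htop μ hlt)
    · exact hmem (mem_image.2 ⟨μ, mem_filter.2 ⟨mem_support_iff.2 hne, heq.symm⟩, rfl⟩)

theorem IsSymmetric.mem_span_doubleMonomialSymm {f : MvPolynomial (Fin r) R}
    (hf : f.IsSymmetric) :
    f ∈ Submodule.span R (doubleMonomialSymm a '' {l | Antitone l}) := by
  suffices h : ∀ d, ∀ f : MvPolynomial (Fin r) R, f.IsSymmetric →
      (∀ μ : Fin r →₀ ℕ, d ≤ μ.degree → coeff μ f = 0) →
      f ∈ Submodule.span R (doubleMonomialSymm a '' {l | Antitone l}) from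
    h _ f hf fun μ hμ => coeff_eq_zero_of_totalDegree_lt hμ
  intro d
  induction d with
  | zero =>
    intro f _ hzero
    rw [show f = 0 from MvPolynomial.ext _ _ fun μ => hzero μ (Nat.zero_le _)]
    exact zero_mem _
  | succ d ih =>
    intro f hf htop
    set p := ∑ l ∈ sortedExponentsOfDegree f d,
      coeff (Finsupp.equivFunOnFinite.symm l) f • doubleMonomialSymm a l
    have hp_mem : p ∈ Submodule.span R (doubleMonomialSymm a '' {l | Antitone l}) :=
      sum_mem fun l hl => Submodule.smul_mem _ _ <| Submodule.subset_span
        ⟨l, (antitone_and_sum_of_mem_sortedExponentsOfDegree hl).1, rfl⟩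
    have hp_symm : p.IsSymmetric := (mem_symmetricSubalgebra p).1 <|
      Subalgebra.sum_mem _ fun l _ => Subalgebra.smul_mem _
        ((mem_symmetricSubalgebra _).2 (isSymmetric_doubleMonomialSymm a l)) _
    have hlower := ih (f - p) (hf.sub hp_symm)
      fun μ hμ => coeff_sub_sum_doubleMonomialSymm_eq_zero a hf htop hμ
    simpa using add_mem hlower hp_mem

end Spanning

section FactorialPowerIdeal

variable {σ R : Type*} [CommRing R] (a : ℕ → R) (n : ℕ)

-- `I_{n,r}` for general `a` (with `a_0 = 0` it is generated by the `ξ_i(ξ_i + a_1)⋯`).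
noncomputable def factorialPowerIdeal (σ : Type*) : Ideal (MvPolynomial σ R) :=
  Ideal.span (Set.range fun i : σ => ∏ t ∈ range n, (X i + C (a t)))

lemma factorialMonomial_mem_factorialPowerIdeal [Fintype σ] {m : σ → ℕ} {j : σ} (h : n ≤ m j) :
    factorialMonomial a m ∈ factorialPowerIdeal a n σ := by
  refine Ideal.mem_of_dvd _ ?_ (Ideal.subset_span ⟨j, rfl⟩)
  exact (prod_dvd_prod_of_subset _ _ _ (range_subset_range.2 h)).trans
    (dvd_prod_of_mem _ (mem_univ j))

lemma doubleMonomialSymm_mem_factorialPowerIdeal [Fintype σ] [DecidableEq σ] {l : σ → ℕ} {i : σ}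
    (h : n ≤ l i) : doubleMonomialSymm a l ∈ factorialPowerIdeal a n σ := by
  refine sum_mem fun m hm => ?_
  obtain ⟨τ, rfl⟩ := mem_rearrangements.1 hm
  exact factorialMonomial_mem_factorialPowerIdeal a n (j := τ.symm i) (by simpa using h)

lemma eval_eq_zero_of_mem_factorialPowerIdeal {x : σ → R} (hx : ∀ i, ∃ t < n, x i + a t = 0)
    {p : MvPolynomial σ R} (hp : p ∈ factorialPowerIdeal a n σ) : eval x p = 0 := by
  refine (Ideal.span_le (I := RingHom.ker (eval x))).2 ?_ hp
  rintro _ ⟨i, rfl⟩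
  obtain ⟨t, ht, hxt⟩ := hx i
  simpa [map_prod] using prod_eq_zero (mem_range.2 ht) hxt

lemma doubleMonomialSymm_mem_restrictDegree [Fintype σ] [DecidableEq σ] {l : σ → ℕ} {d : ℕ}
    (h : ∀ i, l i ≤ d) : doubleMonomialSymm a l ∈ restrictDegree σ R d := by
  refine sum_mem fun m hm => (mem_restrictDegree _ _ _).2 fun μ hμ i => ?_
  obtain ⟨τ, rfl⟩ := mem_rearrangements.1 hm
  exact ((isMonicAt_factorialMonomial a _).1 μ hμ i).trans (h (τ i))

-- Combinatorial Nullstellensatz on the grid `{-a_0, …, -a_{n-1}}^σ`, where the ideal vanishes.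
lemma eq_zero_of_mem_factorialPowerIdeal_of_mem_restrictDegree [Finite σ] [IsDomain R]
    (hn : 0 < n) (ha : Set.InjOn a (range n)) {p : MvPolynomial σ R}
    (hI : p ∈ factorialPowerIdeal a n σ) (hdeg : p ∈ restrictDegree σ R (n - 1)) : p = 0 := by
  classical
  have hcard : ((range n).image fun t => -a t).card = n := by
    rw [card_image_of_injOn fun s hs t ht hst => ha hs ht (neg_inj.1 hst), card_range]
  have hdegOf (i : σ) : degreeOf i p < ((range n).image fun t => -a t).card := by
    rw [hcard]
    exact Nat.lt_of_le_pred hn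
      (degreeOf_le_iff.2 fun μ hμ => (mem_restrictDegree _ _ _).1 hdeg μ hμ i)
  refine eq_zero_of_eval_zero_at_prod_finset p _ hdegOf fun x hx =>
    eval_eq_zero_of_mem_factorialPowerIdeal a n (fun i => ?_) hI
  obtain ⟨t, ht, hxt⟩ := mem_image.1 (hx i)
  exact ⟨t, mem_range.1 ht, by rw [← hxt, neg_add_cancel]⟩

theorem IsSymmetric.mem_span_doubleMonomialSymm_of_mem_factorialPowerIdeal [IsDomain R] {r : ℕ}
    (hn : 0 < n) (ha : Set.InjOn a (range n)) {f : MvPolynomial (Fin r) R} (hf : f.IsSymmetric)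
    (hI : f ∈ factorialPowerIdeal a n (Fin r)) :
    f ∈ Submodule.span R (doubleMonomialSymm a '' {l | Antitone l ∧ ∃ i, n ≤ l i}) := by
  have hsplit : {l : Fin r → ℕ | Antitone l} =
      {l | Antitone l ∧ ∃ i, n ≤ l i} ∪ {l | Antitone l ∧ ∀ i, l i < n} := by
    ext l
    by_cases h : ∃ i, n ≤ l i
    · simp [h]
    · simp only [not_exists, not_le] at h
      simp [h]
  have hspan := hf.mem_span_doubleMonomialSymm a
  rw [hsplit, Set.image_union, Submodule.span_union] at hspan
  obtain ⟨g, hg, h, hh, rfl⟩ := Submodule.mem_sup.1 hspan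
  have hgI : g ∈ factorialPowerIdeal a n (Fin r) := by
    refine (Submodule.span_le (p := (factorialPowerIdeal a n (Fin r)).restrictScalars R)).2 ?_ hg
    rintro _ ⟨l, ⟨-, i, hi⟩, rfl⟩
    exact doubleMonomialSymm_mem_factorialPowerIdeal a n hi
  have hh0 : h = 0 := by
    refine eq_zero_of_mem_factorialPowerIdeal_of_mem_restrictDegree a n hn ha
      ((Submodule.add_mem_iff_right _ hgI).1 hI) ((Submodule.span_le).2 ?_ hh)
    rintro _ ⟨l, ⟨-, hl⟩, rfl⟩
    exact doubleMonomialSymm_mem_restrictDegree a fun i => Nat.le_pred_of_lt (hl i)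
  rwa [hh0, add_zero]

end FactorialPowerIdeal

end MvPolynomial

lemma Subalgebra.mem_ideal_span_of_coe_mem_span {R A : Type*} [CommSemiring R] [CommSemiring A]
    [Algebra R A] {S : Subalgebra R A} {s : Set S} {x : S}
    (hx : (x : A) ∈ Submodule.span R ((↑) '' s)) : x ∈ Ideal.span s := by
  rw [show ((↑) '' s : Set A) = S.val.toLinearMap '' s from rfl, Submodule.span_image] at hx
  obtain ⟨y, hy, hyx⟩ := Submodule.mem_map.1 hx
  rw [← Subtype.ext hyx]
  exact Submodule.span_le_restrictScalars R S s hy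

lemma injOn_ybar (n : ℕ) (hn : 0 < n) : Set.InjOn (ybar n hn) (range n) := by
  intro s hs t ht hst
  rw [coe_range, Set.mem_Iio] at hs ht
  simp only [ybar, Nat.mod_eq_of_lt hs, Nat.mod_eq_of_lt ht] at hst
  split_ifs at hst with hs0 ht0 ht0
  · omega
  · exact absurd hst.symm (X_ne_zero _)
  · exact absurd hst (X_ne_zero _)
  · have := Fin.mk.inj_iff.1 (X_injective hst)
    omega

lemma X_mul_prod_Icc_ybar (n : ℕ) (hn : 0 < n) {r : ℕ} (i : Fin r) :
    X i * ∏ t ∈ Icc 1 (n - 1), (X i + C (ybar n hn t)) =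
      ∏ t ∈ range n, (X i + C (ybar n hn t) : MvPolynomial (Fin r) _) := by
  have hrange : range n = insert 0 (Icc 1 (n - 1)) := by
    ext t
    simp only [mem_range, mem_insert, mem_Icc]
    omega
  rw [hrange, prod_insert (by simp), ybar, dif_pos (Nat.zero_mod n), map_zero, add_zero]

lemma dmsymY_eq_doubleMonomialSymm (n : ℕ) (hn : 0 < n) {r : ℕ} (l : Fin r → ℕ) :
    dmsymY n hn l = doubleMonomialSymm (ybar n hn) l := by
  have hterm (τ : Equiv.Perm (Fin r)) : ∏ i, ∏ t ∈ range (l i), (X (τ i) + C (ybar n hn t)) =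
      factorialMonomial (ybar n hn) (l ∘ τ.symm) := by
    rw [← rename_factorialMonomial]
    simp [factorialMonomial, map_prod]
  have himage : univ.image (fun τ : Equiv.Perm (Fin r) => l ∘ τ.symm) = rearrangements l := by
    ext m
    simp only [mem_image, mem_univ, true_and, mem_rearrangements]
    exact ⟨fun ⟨τ, h⟩ => ⟨τ.symm, h⟩, fun ⟨τ, h⟩ => ⟨τ.symm, by simpa using h⟩⟩
  have hterms : univ.image (fun τ : Equiv.Perm (Fin r) =>
      ∏ i, ∏ t ∈ range (l i), (X (τ i) + C (ybar n hn t))) =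
        (rearrangements l).image (factorialMonomial (ybar n hn)) := by
    simp_rw [hterm, ← himage, image_image]
    rfl
  rw [dmsymY, hterms, sum_image fun _ _ _ _ h => factorialMonomial_injective _ h]
  rfl

/-- For `I_{n,r} ⊆ R'[ξ_1,…,ξ_r]` the ideal generated by the
`ξ_i(ξ_i + y_1)⋯(ξ_i + y_{n-1})`, the ideal of symmetric elements of `I_{n,r}` is
generated, as an ideal of the ring of symmetric polynomials, by the double monomial
symmetric polynomials `m_λ(ξ|ȳ)` for partitions `λ` with `λ_1 ≥ n` and at most `r`
parts. -/
theorem symmetric_ideal_generated_by_double_monomials (n : ℕ) (hn : 0 < n) (r : ℕ) :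
    Ideal.comap
        (MvPolynomial.symmetricSubalgebra (Fin r) (MvPolynomial (Fin (n - 1)) ℤ)).val.toRingHom
        (Ideal.span (Set.range fun i : Fin r =>
          MvPolynomial.X i * ∏ t ∈ Finset.Icc 1 (n - 1),
            (MvPolynomial.X i + MvPolynomial.C (ybar n hn t))))
      = Ideal.span {x : MvPolynomial.symmetricSubalgebra (Fin r) (MvPolynomial (Fin (n - 1)) ℤ) |
          ∃ l : Fin r → ℕ, (∀ i j : Fin r, i ≤ j → l j ≤ l i) ∧ (∃ i : Fin r, n ≤ l i) ∧
            (x : MvPolynomial (Fin r) (MvPolynomial (Fin (n - 1)) ℤ)) = dmsymY n hn l} := by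
  simp_rw [X_mul_prod_Icc_ybar n hn]
  refine le_antisymm (fun x hx => Subalgebra.mem_ideal_span_of_coe_mem_span ?_) (Ideal.span_le.2 ?_)
  · refine Submodule.span_mono ?_ <|
      ((mem_symmetricSubalgebra _).1 x.2).mem_span_doubleMonomialSymm_of_mem_factorialPowerIdeal
        _ n hn (injOn_ybar n hn) hx
    rintro _ ⟨l, ⟨hl, hi⟩, rfl⟩
    exact ⟨⟨_, (mem_symmetricSubalgebra _).2 (isSymmetric_doubleMonomialSymm _ l)⟩,
      ⟨l, fun _ _ h => hl h, hi, (dmsymY_eq_doubleMonomialSymm n hn l).symm⟩, rfl⟩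
  · rintro x ⟨l, -, ⟨i, hi⟩, hx⟩
    rw [SetLike.mem_coe, Ideal.mem_comap]
    change (x : MvPolynomial (Fin r) _) ∈ factorialPowerIdeal (ybar n hn) n (Fin r)
    rw [hx, dmsymY_eq_doubleMonomialSymm]
    exact doubleMonomialSymm_mem_factorialPowerIdeal _ n hi
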